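/- arXiv:1712.07344 — 8 statements merged into one kernel-verified Lean document; each statement's English description precedes it below -/
import Mathlib

section
/- Let E be a Hausdorff locally convex space over ℝ and let Ẽ be its completion. Then the intersection of all Mackey-complete subspaces G with E ⊆ G ⊆ Ẽ (each carrying the topology induced from Ẽ) is itself Mackey-complete; in particular, there is a smallest Mackey-complete subspace of Ẽ containing E (the Mackey completion Ê^M of E). -/
/-!
A Mackey-Cauchy sequence in the intersection `M` of the Mackey-complete subspaces `G ⊇ E` is
Cauchy, so it converges to some `l` in the complete space `Ẽ`. It stays Mackey-Cauchy in each
`G` (the inclusion `M → G` is continuous linear, so it maps bounded absolutely convex sets to such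
sets), hence converges in `G`; as `Ẽ` is Hausdorff the two limits agree, so `l` lies in every `G`,
i.e. in `M`.
-/

open Filter Topology Set Bornology Pointwise

/-- A sequence in a locally convex space is *Mackey-Cauchy* if there are a bounded
absolutely convex set `B` and a double sequence of nonnegative reals `c` tending to `0`
such that `x n - x m ∈ c n m • B` for all `n, m`. -/
def MackeyCauchy (E : Type*) [AddCommGroup E] [Module ℝ E] [TopologicalSpace E]
    (x : ℕ → E) : Prop :=
  ∃ (B : Set E) (c : ℕ → ℕ → ℝ),
    IsVonNBounded ℝ B ∧ Convex ℝ B ∧ Balanced ℝ B ∧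
    (∀ n m, 0 ≤ c n m) ∧
    Tendsto (fun p : ℕ × ℕ => c p.1 p.2) atTop (𝓝 (0 : ℝ)) ∧
    ∀ n m, x n - x m ∈ c n m • B

/-- A locally convex space is *Mackey-complete* if every Mackey-Cauchy sequence converges. -/
def MackeyComplete (E : Type*) [AddCommGroup E] [Module ℝ E] [TopologicalSpace E] : Prop :=
  ∀ x : ℕ → E, MackeyCauchy E x → ∃ l : E, Tendsto x atTop (𝓝 l)

/-- A locally convex space is *k-quasi-complete* if the closed absolutely convex hull of
every compact set is compact. -/
def KQuasiComplete (E : Type*) [AddCommGroup E] [Module ℝ E] [TopologicalSpace E] : Prop :=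
  ∀ K : Set E, IsCompact K → IsCompact (closure (convexHull ℝ (balancedHull ℝ K)))

theorem Balanced.image {𝕜 E F : Type*} [SeminormedRing 𝕜] [AddCommGroup E] [Module 𝕜 E]
    [AddCommGroup F] [Module 𝕜 F] {s : Set E} (hs : Balanced 𝕜 s) (f : E →ₗ[𝕜] F) :
    Balanced 𝕜 (f '' s) := fun a ha ↦ by
  rw [← image_smul_set]
  exact image_mono (hs a ha)

section MackeyCauchy

variable {F : Type*} [AddCommGroup F] [Module ℝ F] {x : ℕ → F}

theorem MackeyCauchy.map [TopologicalSpace F] {G : Type*} [AddCommGroup G] [Module ℝ G]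
    [TopologicalSpace G] (h : MackeyCauchy F x) (f : F →L[ℝ] G) :
    MackeyCauchy G (fun n ↦ f (x n)) := by
  obtain ⟨B, c, hB, hconv, hbal, hc0, hc, hmem⟩ := h
  refine ⟨f '' B, c, hB.image f, hconv.linear_image f.toLinearMap,
    hbal.image f.toLinearMap, hc0, hc, fun n m ↦ ?_⟩
  rw [← map_sub, ← image_smul_set]
  exact mem_image_of_mem f (hmem n m)

theorem MackeyCauchy.tendsto_sub [TopologicalSpace F] (h : MackeyCauchy F x) :
    Tendsto (fun p : ℕ × ℕ ↦ x p.1 - x p.2) atTop (𝓝 0) := by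
  obtain ⟨B, c, hB, -, -, -, hc, hmem⟩ := h
  choose b hbB hb using hmem
  have hbounded := hB.smul_tendsto_zero (x := fun p : ℕ × ℕ ↦ b p.1 p.2)
    (.of_forall fun _ ↦ hbB _ _) hc
  exact hbounded.congr fun p ↦ hb p.1 p.2

theorem MackeyCauchy.cauchySeq [UniformSpace F] [IsUniformAddGroup F] (h : MackeyCauchy F x) :
    CauchySeq x := by
  rw [cauchySeq_iff_tendsto, uniformity_eq_comap_nhds_zero F, tendsto_comap_iff]
  simpa only [Function.comp_def, Prod.map_fst, Prod.map_snd, neg_sub, neg_zero] using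
    h.tendsto_sub.neg

end MackeyCauchy

theorem Submodule.mem_of_tendsto_of_mackeyComplete {F : Type*} [AddCommGroup F] [Module ℝ F]
    [TopologicalSpace F] [T2Space F] {G H : Submodule ℝ F} (hG : MackeyComplete G) (hHG : H ≤ G)
    {x : ℕ → H} (hx : MackeyCauchy H x) {l : F} (hl : Tendsto (fun n ↦ (x n : F)) atTop (𝓝 l)) :
    l ∈ G := by
  obtain ⟨y, hy⟩ := hG _ (hx.map (H.subtypeL.codRestrict G fun z ↦ hHG z.2))
  rw [tendsto_nhds_unique hl ((continuous_subtype_val.tendsto y).comp hy)]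
  exact y.2

theorem mackeyComplete_sInf {F : Type*} [AddCommGroup F] [Module ℝ F] [UniformSpace F]
    [IsUniformAddGroup F] [CompleteSpace F] [T2Space F] (S : Set (Submodule ℝ F))
    (hS : ∀ G ∈ S, MackeyComplete G) : MackeyComplete ↥(sInf S) := by
  intro x hx
  obtain ⟨l, hl⟩ := cauchySeq_tendsto_of_complete (hx.map (sInf S).subtypeL).cauchySeq
  have hlS : l ∈ sInf S := Submodule.mem_sInf.2 fun G hG ↦
    Submodule.mem_of_tendsto_of_mackeyComplete (hS G hG) (sInf_le hG) hx hl
  exact ⟨⟨l, hlS⟩, tendsto_subtype_rng.2 hl⟩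

theorem mackeyCompletion_isLeast_general
    (E : Type*) [AddCommGroup E] [Module ℝ E] [UniformSpace E] [IsUniformAddGroup E]
    [UniformContinuousConstSMul ℝ E] :
    IsLeast {G : Submodule ℝ (UniformSpace.Completion E) |
        Set.range ((↑) : E → UniformSpace.Completion E) ⊆ (G : Set (UniformSpace.Completion E)) ∧
        MackeyComplete G}
      (sInf {G : Submodule ℝ (UniformSpace.Completion E) |
        Set.range ((↑) : E → UniformSpace.Completion E) ⊆ (G : Set (UniformSpace.Completion E)) ∧
        MackeyComplete G}) := by
  refine ⟨⟨fun y hy ↦ Submodule.mem_sInf.2 fun G hG ↦ hG.1 hy, ?_⟩, fun G hG ↦ sInf_le hG⟩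
  exact mackeyComplete_sInf _ fun G hG ↦ hG.2

/-- For a Hausdorff locally convex space `E` over `ℝ`, the intersection of all
Mackey-complete subspaces of the completion `Ẽ` of `E` containing `E` is itself Mackey-complete;
i.e. it is the least element of the family of such subspaces (the Mackey completion of `E`). -/
theorem mackeyCompletion_isLeast
    (E : Type*) [AddCommGroup E] [Module ℝ E] [UniformSpace E] [IsUniformAddGroup E]
    [ContinuousSMul ℝ E] [LocallyConvexSpace ℝ E] [T2Space E]
    [UniformContinuousConstSMul ℝ E] :
    IsLeast {G : Submodule ℝ (UniformSpace.Completion E) |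
        Set.range ((↑) : E → UniformSpace.Completion E) ⊆ (G : Set (UniformSpace.Completion E)) ∧
        MackeyComplete G}
      (sInf {G : Submodule ℝ (UniformSpace.Completion E) |
        Set.range ((↑) : E → UniformSpace.Completion E) ⊆ (G : Set (UniformSpace.Completion E)) ∧
        MackeyComplete G}) :=
  mackeyCompletion_isLeast_general E
end

section
/- Let E be a Hausdorff locally convex space over ℝ and let Ẽ be its completion. Then the intersection of all k-quasi-complete subspaces G with E ⊆ G ⊆ Ẽ (each carrying the topology induced from Ẽ) is itself k-quasi-complete; in particular, there is a smallest k-quasi-complete subspace of Ẽ containing E (the k-quasi-completion Ê^K of E). -/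
open Filter Topology Set Bornology Pointwise

/-!
Let `I` be the intersection and `K` a compact subset of `I`. The completion `Ẽ` is a complete
locally convex space, so the closure `C` in `Ẽ` of the absolutely convex hull of `K` is compact.
For each k-quasi-complete `G ⊇ I`, the closed absolutely convex hull of `K` in `G` is compact,
hence closed in `Ẽ`, so it contains `C`. Therefore `C ⊆ I`, and `C` is also the closed absolutely
convex hull of `K` in `I`.
-/

open UniformSpace

theorem Submodule.absConvex {𝕜 E : Type*} [NontriviallyNormedField 𝕜] [PartialOrder 𝕜]
    [AddCommGroup E] [Module 𝕜 E] (G : Submodule 𝕜 E) : AbsConvex 𝕜 (G : Set E) :=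
  ⟨fun a _ => smul_set_subset_iff.2 fun _ hx => G.smul_mem a hx, G.convex⟩

namespace LinearMap

variable {𝕜 E F : Type*} [NontriviallyNormedField 𝕜]
  [AddCommGroup E] [Module 𝕜 E] [AddCommGroup F] [Module 𝕜 F]

theorem image_balancedHull (f : E →ₗ[𝕜] F) (s : Set E) :
    f '' balancedHull 𝕜 s = balancedHull 𝕜 (f '' s) := by
  simp only [balancedHull, image_iUnion₂, image_smul_set]

theorem image_absConvexHull [PartialOrder 𝕜] (f : E →ₗ[𝕜] F) (s : Set E) :
    f '' absConvexHull 𝕜 s = absConvexHull 𝕜 (f '' s) := by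
  rw [absConvexHull_eq_convexHull_balancedHull, absConvexHull_eq_convexHull_balancedHull,
    f.image_convexHull, f.image_balancedHull]

end LinearMap

namespace UniformSpace.Completion

variable {E : Type*} [AddCommGroup E] [UniformSpace E] [IsUniformAddGroup E]

/-- Scalar multiplication is `ℤ`-bilinear, so Bourbaki's extension theorem for bilinear maps
on dense subgroups extends it continuously from `R × E` to `R × Completion E`. -/
instance instContinuousSMul {R : Type*} [Ring R] [TopologicalSpace R] [IsTopologicalAddGroup R]
    [Module R E] [ContinuousSMul R E] [UniformContinuousConstSMul R E] :
    ContinuousSMul R (Completion E) := by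
  let φ : R →+ E →+ Completion E :=
    { toFun := fun a => toCompl.comp (DistribSMul.toAddMonoidHom E a)
      map_zero' := by ext; simp [coe_zero]
      map_add' := fun a b => by ext; simp [add_smul, coe_add, coe_smul] }
  have hφ : Continuous fun p : R × E => φ p.1 p.2 := (continuous_coe E).comp continuous_smul
  have hid : IsDenseInducing (AddMonoidHom.id R) := IsDenseEmbedding.id.isDenseInducing
  have hext := hid.extend_Z_bilin (isDenseInducing_toCompl E) hφ
  refine ⟨hext.congr fun ⟨a, y⟩ => ?_⟩
  refine Completion.induction_on y (isClosed_eq ?_ (continuous_const_smul a)) fun x => ?_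
  · exact hext.comp (continuous_const.prodMk continuous_id)
  · exact ((hid.prodMap (isDenseInducing_toCompl E)).extend_eq hφ (a, x)).trans (coe_smul a x)

instance instLocallyConvexSpace {𝕜 : Type*} [Field 𝕜] [PartialOrder 𝕜] [Module 𝕜 E]
    [UniformContinuousConstSMul 𝕜 E] [LocallyConvexSpace 𝕜 E] :
    LocallyConvexSpace 𝕜 (Completion E) := by
  refine (locallyConvexSpace_iff_exists_convex_subset_zero 𝕜 _).2 fun U hU => ?_
  obtain ⟨W, ⟨hW, hWc⟩, hWU⟩ := (closed_nhds_basis (0 : Completion E)).mem_iff.1 hU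
  obtain ⟨D, hD, hDc, hDW⟩ := (locallyConvexSpace_iff_exists_convex_subset_zero 𝕜 E).1 ‹_› _
    ((continuous_coe E).tendsto' 0 0 coe_zero hW)
  refine ⟨closure (toCompl '' D), ?_, (hDc.is_linear_image ⟨coe_add, coe_smul⟩).closure,
    (closure_minimal (image_subset_iff.2 hDW) hWc).trans hWU⟩
  simpa using! (isDenseInducing_toCompl E).closure_image_mem_nhds hD

end UniformSpace.Completion

section KQuasiComplete

variable {F : Type*} [AddCommGroup F] [Module ℝ F]

theorem kQuasiComplete_iff [TopologicalSpace F] : KQuasiComplete F ↔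
    ∀ K : Set F, IsCompact K → IsCompact (closure (absConvexHull ℝ K)) := by
  simp only [KQuasiComplete, absConvexHull_eq_convexHull_balancedHull]

theorem kQuasiComplete_of_completeSpace [UniformSpace F] [IsUniformAddGroup F]
    [ContinuousSMul ℝ F] [LocallyConvexSpace ℝ F] [CompleteSpace F] : KQuasiComplete F :=
  kQuasiComplete_iff.2 fun _ hK => isCompact_iff_totallyBounded_isComplete.2
    ⟨(totallyBounded_absConvexHull.2 hK.totallyBounded).closure, isClosed_closure.isComplete⟩

variable [TopologicalSpace F]

theorem Submodule.image_val_closure_absConvexHull (G : Submodule ℝ F) (K : Set G) :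
    (↑) '' closure (absConvexHull ℝ K) = closure (absConvexHull ℝ ((↑) '' K : Set F)) ∩ G := by
  rw [IsEmbedding.subtypeVal.closure_eq_preimage_closure_image, image_preimage_eq_inter_range,
    ← G.coe_subtype, G.subtype.image_absConvexHull, G.coe_subtype, Subtype.range_coe]

theorem Submodule.kQuasiComplete_iff [T2Space F] (G : Submodule ℝ F) : KQuasiComplete G ↔
    ∀ K : Set F, IsCompact K → K ⊆ G →
      IsCompact (closure (absConvexHull ℝ K)) ∧ closure (absConvexHull ℝ K) ⊆ G := by
  rw [_root_.kQuasiComplete_iff]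
  constructor
  · intro hG K hK hKG
    have hK' : (↑) '' ((↑) ⁻¹' K : Set G) = K := by
      rw [image_preimage_eq_inter_range, Subtype.range_coe, inter_eq_left.2 hKG]
    have hcompact := Subtype.isCompact_iff.1 (hG _ (Subtype.isCompact_iff.2 (hK'.symm ▸ hK)))
    rw [G.image_val_closure_absConvexHull, hK'] at hcompact
    have hsub : closure (absConvexHull ℝ K) ⊆ G :=
      (closure_minimal (subset_inter subset_closure (absConvexHull_min hKG G.absConvex))
        hcompact.isClosed).trans inter_subset_right
    rw [inter_eq_left.2 hsub] at hcompact
    exact ⟨hcompact, hsub⟩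
  · intro h K hK
    obtain ⟨hcompact, hsub⟩ := h _ (Subtype.isCompact_iff.1 hK) (Subtype.coe_image_subset _ _)
    rw [Subtype.isCompact_iff, G.image_val_closure_absConvexHull, inter_eq_left.2 hsub]
    exact hcompact

end KQuasiComplete

theorem kQuasiCompletion_isLeast_general
    (E : Type*) [AddCommGroup E] [Module ℝ E] [UniformSpace E] [IsUniformAddGroup E]
    [ContinuousSMul ℝ E] [LocallyConvexSpace ℝ E]
    [UniformContinuousConstSMul ℝ E] :
    IsLeast {G : Submodule ℝ (UniformSpace.Completion E) |
        Set.range ((↑) : E → UniformSpace.Completion E) ⊆ (G : Set (UniformSpace.Completion E)) ∧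
        KQuasiComplete G}
      (sInf {G : Submodule ℝ (UniformSpace.Completion E) |
        Set.range ((↑) : E → UniformSpace.Completion E) ⊆ (G : Set (UniformSpace.Completion E)) ∧
        KQuasiComplete G}) := by
  refine ⟨⟨fun x hx => Submodule.mem_sInf.2 fun G hG => hG.1 hx, ?_⟩, fun G hG => sInf_le hG⟩
  refine (Submodule.kQuasiComplete_iff _).2 fun K hK hKI =>
    ⟨kQuasiComplete_iff.1 kQuasiComplete_of_completeSpace K hK, fun z hz => ?_⟩
  exact Submodule.mem_sInf.2 fun G hG =>
    ((Submodule.kQuasiComplete_iff G).1 hG.2 K hK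
      (hKI.trans (SetLike.coe_subset_coe.2 (sInf_le hG)))).2 hz

/-- For a Hausdorff locally convex space `E` over `ℝ`, the intersection of all
k-quasi-complete subspaces of the completion `Ẽ` of `E` containing `E` is itself
k-quasi-complete; i.e. it is the least element of the family of such subspaces
(the k-quasi-completion of `E`). -/
theorem kQuasiCompletion_isLeast
    (E : Type*) [AddCommGroup E] [Module ℝ E] [UniformSpace E] [IsUniformAddGroup E]
    [ContinuousSMul ℝ E] [LocallyConvexSpace ℝ E] [T2Space E]
    [UniformContinuousConstSMul ℝ E] :
    IsLeast {G : Submodule ℝ (UniformSpace.Completion E) |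
        Set.range ((↑) : E → UniformSpace.Completion E) ⊆ (G : Set (UniformSpace.Completion E)) ∧
        KQuasiComplete G}
      (sInf {G : Submodule ℝ (UniformSpace.Completion E) |
        Set.range ((↑) : E → UniformSpace.Completion E) ⊆ (G : Set (UniformSpace.Completion E)) ∧
        KQuasiComplete G}) :=
  kQuasiCompletion_isLeast_general E
end

section
/- Let E, F, G be locally convex topological vector spaces over ℝ, let h : E × F → G be a bilinear map, and let A ⊆ E and B ⊆ F be totally bounded sets such that for every neighborhood U of 0 in G there exist a neighborhood V of 0 in E with h(V × B) ⊆ U and a neighborhood W of 0 in F with h(A × W) ⊆ U. Then h(A × B) is totally bounded in G. -/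
/-!
Take finite nets `s ⊆ A` and `t` of `B`, and for `x ∈ A`, `y ∈ B` choose `a ∈ s`, `b ∈ t` close
to them. Then `h x y - h a b = h (x - a) y + h a (y - b)`: the first term is small by
hypocontinuity on `B` (as `y ∈ B`), the second by hypocontinuity on `A` (as `a ∈ A`, which is why
the net of `A` is taken inside `A`). So `h(s × t)` is a finite net of `h(A × B)`.
-/

open Filter Topology Set Uniformity

lemma TotallyBounded.exists_finite_subset_sub_mem {E : Type*} [AddGroup E] [UniformSpace E]
    [IsUniformAddGroup E] {A : Set E} (hA : TotallyBounded A) {V : Set E} (hV : V ∈ 𝓝 0) :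
    ∃ s ⊆ A, s.Finite ∧ ∀ x ∈ A, ∃ a ∈ s, x - a ∈ V := by
  have hd : {p : E × E | p.1 - p.2 ∈ V} ∈ 𝓤 E := by
    rw [uniformity_eq_comap_nhds_zero_swapped]
    exact preimage_mem_comap hV
  obtain ⟨s, hsA, hs, hcover⟩ := totallyBounded_iff_subset.mp hA _ hd
  exact ⟨s, hsA, hs, fun x hx => by simpa using hcover hx⟩

lemma LinearMap.map_sub_sub₂ {R E F G : Type*} [CommSemiring R] [AddCommGroup E] [Module R E]
    [AddCommGroup F] [Module R F] [AddCommGroup G] [Module R G] (h : E →ₗ[R] F →ₗ[R] G)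
    (x a : E) (y b : F) : h x y - h a b = h (x - a) y + h a (y - b) := by
  simp only [map_sub, LinearMap.sub_apply]
  abel

theorem totallyBounded_image2_of_hypocontinuous_general
    {E F G : Type*}
    [AddCommGroup E] [Module ℝ E] [UniformSpace E] [IsUniformAddGroup E]
    [AddCommGroup F] [Module ℝ F] [UniformSpace F] [IsUniformAddGroup F]
    [AddCommGroup G] [Module ℝ G] [UniformSpace G] [IsUniformAddGroup G]
    (h : E →ₗ[ℝ] F →ₗ[ℝ] G) (A : Set E) (B : Set F)
    (hA : TotallyBounded A) (hB : TotallyBounded B)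
    (hleft : ∀ U ∈ 𝓝 (0 : G), ∃ V ∈ 𝓝 (0 : E), ∀ x ∈ V, ∀ y ∈ B, h x y ∈ U)
    (hright : ∀ U ∈ 𝓝 (0 : G), ∃ W ∈ 𝓝 (0 : F), ∀ x ∈ A, ∀ y ∈ W, h x y ∈ U) :
    TotallyBounded (Set.image2 (fun x y => h x y) A B) := by
  rw [totallyBounded_iff_subset_finite_iUnion_nhds_zero]
  intro U hU
  obtain ⟨U', hU', hU'U⟩ := exists_nhds_zero_half hU
  obtain ⟨V, hV, hVB⟩ := hleft U' hU'
  obtain ⟨W, hW, hAW⟩ := hright U' hU'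
  obtain ⟨s, hsA, hs, hsA_cover⟩ := hA.exists_finite_subset_sub_mem hV
  obtain ⟨t, -, ht, htB_cover⟩ := hB.exists_finite_subset_sub_mem hW
  refine ⟨image2 (fun x y => h x y) s t, hs.image2 _ ht, ?_⟩
  rintro _ ⟨x, hx, y, hy, rfl⟩
  obtain ⟨a, ha, hxa⟩ := hsA_cover x hx
  obtain ⟨b, hb, hyb⟩ := htB_cover y hy
  refine mem_iUnion₂.mpr ⟨h a b, mem_image2_of_mem ha hb, ?_⟩
  rw [mem_vadd_set_iff_neg_vadd_mem, vadd_eq_add, neg_add_eq_sub, h.map_sub_sub₂ x a y b]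
  exact hU'U _ (hVB _ hxa _ hy) _ (hAW _ (hsA ha) _ hyb)

/-- A bilinear map which is hypocontinuous with respect to a pair of totally
bounded sets `A`, `B` maps `A × B` to a totally bounded set. -/
theorem totallyBounded_image2_of_hypocontinuous
    {E F G : Type*}
    [AddCommGroup E] [Module ℝ E] [UniformSpace E] [IsUniformAddGroup E]
    [ContinuousSMul ℝ E] [LocallyConvexSpace ℝ E]
    [AddCommGroup F] [Module ℝ F] [UniformSpace F] [IsUniformAddGroup F]
    [ContinuousSMul ℝ F] [LocallyConvexSpace ℝ F]
    [AddCommGroup G] [Module ℝ G] [UniformSpace G] [IsUniformAddGroup G]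
    [ContinuousSMul ℝ G] [LocallyConvexSpace ℝ G]
    (h : E →ₗ[ℝ] F →ₗ[ℝ] G) (A : Set E) (B : Set F)
    (hA : TotallyBounded A) (hB : TotallyBounded B)
    (hleft : ∀ U ∈ 𝓝 (0 : G), ∃ V ∈ 𝓝 (0 : E), ∀ x ∈ V, ∀ y ∈ B, h x y ∈ U)
    (hright : ∀ U ∈ 𝓝 (0 : G), ∃ W ∈ 𝓝 (0 : F), ∀ x ∈ A, ∀ y ∈ W, h x y ∈ U) :
    TotallyBounded (Set.image2 (fun x y => h x y) A B) :=
  totallyBounded_image2_of_hypocontinuous_general h A B hA hB hleft hright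
end

section
/- Let K be a compact topological space and let F be a k-quasi-complete Hausdorff locally convex space over ℝ. Then the space C(K, F) of continuous maps from K to F, equipped with the topology of uniform convergence (the compact-open topology), is k-quasi-complete. -/
open Filter Topology Set Bornology Pointwise

/-!
By Arzelà–Ascoli it suffices to show that the absolutely convex hull `H` of a compact set
`S ⊆ C(K, F)` is equicontinuous and pointwise relatively compact. A compact `S` is
equicontinuous, and both properties pass to `H` because they are expressed by membership
of `f` in preimages of absolutely convex sets under linear maps (`f ↦ f x - f x₀` and
`f ↦ f x`): for the pointwise bound, `f x` lies in the closed absolutely convex hull of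
`S(x)`, which is compact since `F` is k-quasi-complete.
-/

section AbsConvex

variable {𝕜 E G : Type*} [SeminormedRing 𝕜] [PartialOrder 𝕜] [AddCommGroup E] [Module 𝕜 E]
  [AddCommGroup G] [Module 𝕜 G]

theorem AbsConvex.linear_preimage {t : Set G} (ht : AbsConvex 𝕜 t) (φ : E →ₗ[𝕜] G) :
    AbsConvex 𝕜 (φ ⁻¹' t) :=
  ⟨ht.1.mulActionHom_preimage φ.toMulActionHom, ht.2.linear_preimage φ⟩

theorem absConvexHull_subset_preimage {s : Set E} {t : Set G} (ht : AbsConvex 𝕜 t)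
    (φ : E →ₗ[𝕜] G) (hst : MapsTo φ s t) : absConvexHull 𝕜 s ⊆ φ ⁻¹' t :=
  absConvexHull_min hst (ht.linear_preimage φ)

end AbsConvex

namespace ContinuousMap

variable {X α : Type*} [TopologicalSpace X] [UniformSpace α]

open Uniformity in
theorem equicontinuous_of_totallyBounded [CompactSpace X] {S : Set C(X, α)}
    (hS : TotallyBounded S) : Equicontinuous ((↑) : S → X → α) := by
  intro x₀ U hU
  obtain ⟨W, hW, -, hWU⟩ := comp_symm_mem_uniformity_sets hU
  obtain ⟨V, hV, hVsymm, hVW⟩ := comp_symm_mem_uniformity_sets hW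
  have hVW' : V ⊆ W := subset_comp_self_of_mem_uniformity hV |>.trans hVW
  have hV_unif : {fg : C(X, α) × C(X, α) | ∀ x ∈ univ, (fg.1 x, fg.2 x) ∈ V} ∈ 𝓤 C(X, α) :=
    hasBasis_compactConvergenceUniformity.mem_of_mem (i := (univ, V)) ⟨isCompact_univ, hV⟩
  -- The `ε/3` argument: `f` is uniformly `V`-close to one of finitely many `g`, each continuous.
  obtain ⟨t, ht, hSt⟩ := hS _ hV_unif
  have hnear : ∀ᶠ x in 𝓝 x₀, ∀ g ∈ t, (g x₀, g x) ∈ V := by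
    rw [eventually_all_finite ht]
    exact fun g _ ↦ g.continuous.continuousAt.preimage_mem_nhds (UniformSpace.ball_mem_nhds _ hV)
  filter_upwards [hnear] with x hx f
  obtain ⟨g, hgt, hfg⟩ := mem_iUnion₂.mp (hSt f.2)
  exact hWU ⟨g x, hVW ⟨g x₀, hfg x₀ trivial, hx g hgt⟩, hVW' (hVsymm.symm _ _ (hfg x trivial))⟩

theorem isCompact_closure_of_equicontinuous [CompactlyCoherentSpace X] [T2Space α]
    {S : Set C(X, α)} (hS : Equicontinuous ((↑) : S → X → α))
    (hS_pointwise : ∀ x, ∃ Q, IsCompact Q ∧ ∀ f ∈ S, f x ∈ Q) :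
    IsCompact (closure S) := by
  have hclemb : IsClosedEmbedding
      (UniformOnFun.ofFun {L : Set X | IsCompact L} ∘ (DFunLike.coe : C(X, α) → X → α)) := by
    refine ⟨isUniformEmbedding_toUniformOnFunIsCompact.isEmbedding, ?_⟩
    change IsClosed (range toUniformOnFunIsCompact)
    rw [range_toUniformOnFunIsCompact]
    exact UniformOnFun.isClosed_setOfPred_continuous CompactlyCoherentSpace.isCoherentWith
  exact ArzelaAscoli.isCompact_closure_of_isClosedEmbedding (fun L hL ↦ hL) hclemb
    (fun L _ ↦ hS.equicontinuousOn L) fun _ _ x _ ↦ hS_pointwise x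

variable {F : Type*} [AddCommGroup F] [Module ℝ F] [UniformSpace F] [IsUniformAddGroup F]
  [ContinuousSMul ℝ F] [LocallyConvexSpace ℝ F]

theorem equicontinuous_absConvexHull {S : Set C(X, F)} (hS : Equicontinuous ((↑) : S → X → F)) :
    Equicontinuous ((↑) : absConvexHull ℝ S → X → F) := by
  intro x₀ U hU
  rw [uniformity_eq_comap_nhds_zero F] at hU
  obtain ⟨W, hW, hWU⟩ := hU
  obtain ⟨V, ⟨hV, hV_absConvex⟩, hVW⟩ := (nhds_hasBasis_absConvex ℝ F).mem_iff.mp hW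
  have hS_near : ∀ᶠ x in 𝓝 x₀, ∀ f : S, (f : C(X, F)) x - (f : C(X, F)) x₀ ∈ V := by
    refine hS x₀ ((fun p : F × F ↦ p.2 - p.1) ⁻¹' V) ?_
    rw [uniformity_eq_comap_nhds_zero F]
    exact preimage_mem_comap hV
  filter_upwards [hS_near] with x hx g
  have hg := absConvexHull_subset_preimage hV_absConvex
    (evalCLM ℝ x - evalCLM ℝ x₀ : C(X, F) →L[ℝ] F).toLinearMap (fun f hf ↦ hx ⟨f, hf⟩) g.2
  exact hWU (hVW hg)

end ContinuousMap

/-- For a compact topological space `K` and a k-quasi-complete Hausdorff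
locally convex space `F` over `ℝ`, the space `C(K, F)` of continuous maps with the topology of
uniform convergence (the compact-open topology) is k-quasi-complete. -/
theorem kQuasiComplete_continuousMap
    (K : Type*) [TopologicalSpace K] [CompactSpace K]
    (F : Type*) [AddCommGroup F] [Module ℝ F] [TopologicalSpace F] [IsTopologicalAddGroup F]
    [ContinuousSMul ℝ F] [LocallyConvexSpace ℝ F] [T2Space F]
    (hF : KQuasiComplete F) :
    KQuasiComplete C(K, F) := by
  intro S hS
  let _ : UniformSpace F := IsTopologicalAddGroup.rightUniformSpace F
  have : IsUniformAddGroup F := isUniformAddGroup_of_addCommGroup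
  rw [← absConvexHull_eq_convexHull_balancedHull]
  refine ContinuousMap.isCompact_closure_of_equicontinuous
    (ContinuousMap.equicontinuous_absConvexHull
      (ContinuousMap.equicontinuous_of_totallyBounded hS.totallyBounded)) fun x ↦ ?_
  have hQ := hF _ (hS.image (continuous_eval_const x))
  rw [← absConvexHull_eq_convexHull_balancedHull] at hQ
  refine ⟨_, hQ, fun g hg ↦ ?_⟩
  refine absConvexHull_subset_preimage absConvex_absConvexHull.closure
    (ContinuousMap.evalCLM ℝ x : C(K, F) →L[ℝ] F).toLinearMap ?_ hg
  exact fun f hf ↦ subset_closure (subset_absConvexHull ⟨f, hf, rfl⟩)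
end

section
/- Let (C, ⊗_C, 1_C) and (D, ⊗_D, 1_D) be symmetric monoidal categories, let R : C → D be a functor, and let L : D → C be a left adjoint of R which is a strong monoidal functor. If ¬ is a tensorial negation on C, then the functor D → D^op sending E to R(¬(L(E))) is a tensorial negation on D: the bijections ψ_{A,B,X} : Hom_D(A ⊗_D B, R¬L(X)) ≅ Hom_D(A, R¬L(B ⊗_D X)) obtained by conjugating φ_{L(A),L(B),L(X)} with the adjunction bijections and the monoidal structure isomorphism L(B ⊗_D X) ≅ L(B) ⊗_C L(X) are natural in A, B, X and satisfy the associativity coherence condition of a tensorial negation. -/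
open CategoryTheory MonoidalCategory Opposite

universe v₁ v₂ u₁ u₂

/-- A *tensorial negation* on a symmetric monoidal category `C` is a functor `¬ : C → Cᵒᵖ`
(presented here as `N : Cᵒᵖ ⥤ C`) together with bijections
`φ A B X : Hom(A ⊗ B, ¬X) ≃ Hom(A, ¬(B ⊗ X))`, natural in `A`, `B`, `X`, satisfying the
associativity coherence condition. A symmetric monoidal category with a tensorial negation is a
dialogue category. -/
structure IsTensorialNegation {C : Type u₁} [Category.{v₁} C] [MonoidalCategory C]
    (N : Cᵒᵖ ⥤ C)
    (φ : ∀ A B X : C, (A ⊗ B ⟶ N.obj (op X)) ≃ (A ⟶ N.obj (op (B ⊗ X)))) : Prop where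
  natural_left : ∀ {A A' : C} (B X : C) (f : A' ⟶ A) (g : A ⊗ B ⟶ N.obj (op X)),
    φ A' B X (f ▷ B ≫ g) = f ≫ φ A B X g
  natural_middle : ∀ (A : C) {B B' : C} (X : C) (f : B' ⟶ B) (g : A ⊗ B ⟶ N.obj (op X)),
    φ A B' X (A ◁ f ≫ g) = φ A B X g ≫ N.map (op (f ▷ X))
  natural_right : ∀ (A B : C) {X X' : C} (f : X ⟶ X') (g : A ⊗ B ⟶ N.obj (op X')),
    φ A B X (g ≫ N.map (op f)) = φ A B X' g ≫ N.map (op (B ◁ f))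
  assoc : ∀ (A B X Y : C) (g : (A ⊗ B) ⊗ X ⟶ N.obj (op Y)),
    φ A B (X ⊗ Y) (φ (A ⊗ B) X Y g) =
      φ A (B ⊗ X) Y ((α_ A B X).inv ≫ g) ≫ N.map (op (α_ B X Y).inv)

/-- Transport of a tensorial negation along an adjunction `L ⊣ R` whose left
adjoint `L` is strong monoidal: if `(N, φ)` is a tensorial negation on `C`, then
`E ↦ R(¬(L E))` together with the bijections obtained by conjugating `φ` with the adjunction
bijections and the monoidal structure isomorphisms of `L` is a tensorial negation on `D`. -/
theorem isTensorialNegation_transport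
    {C : Type u₁} {D : Type u₂} [Category.{v₁} C] [Category.{v₂} D]
    [MonoidalCategory C] [MonoidalCategory D] [SymmetricCategory C] [SymmetricCategory D]
    (R : C ⥤ D) (L : D ⥤ C) [L.Monoidal] (adj : L ⊣ R)
    (N : Cᵒᵖ ⥤ C) (φ : ∀ A B X : C, (A ⊗ B ⟶ N.obj (op X)) ≃ (A ⟶ N.obj (op (B ⊗ X))))
    (hφ : IsTensorialNegation N φ) :
    IsTensorialNegation (L.op ⋙ N ⋙ R)
      (fun A B X =>
        (((adj.homEquiv (A ⊗ B) (N.obj (op (L.obj X)))).symm.trans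
          ((Functor.Monoidal.μIso L A B).symm.homCongr
            (Iso.refl (N.obj (op (L.obj X)))))).trans
          (φ (L.obj A) (L.obj B) (L.obj X))).trans
          (((Iso.refl (L.obj A)).homCongr
              ((N.mapIso ((Functor.Monoidal.μIso L B X).op)).symm)).trans
            (adj.homEquiv A (N.obj (op (L.obj (B ⊗ X))))))) := by
  constructor
  · intro A A' B X f g
    simp only [Equiv.trans_apply, Iso.homCongr_apply, Iso.refl_hom, Iso.refl_inv, Iso.symm_hom,
      Iso.symm_inv, Category.id_comp, Category.comp_id, Iso.op_inv, Functor.mapIso_hom,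
      Functor.mapIso_inv, Iso.op_hom]
    erw [Adjunction.homEquiv_naturality_left_symm]
    simp only [Functor.Monoidal.μIso_hom, ← Functor.LaxMonoidal.μ_natural_left_assoc]
    rw [hφ.natural_left, Category.assoc]
    erw [Adjunction.homEquiv_naturality_left]
  · intro A B B' X f g
    simp only [Equiv.trans_apply, Iso.homCongr_apply, Iso.refl_hom, Iso.refl_inv, Iso.symm_hom,
      Iso.symm_inv, Category.id_comp, Category.comp_id, Functor.mapIso_hom, Functor.mapIso_inv,
      Iso.op_hom, Iso.op_inv, Functor.Monoidal.μIso_hom, Functor.Monoidal.μIso_inv,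
      Functor.comp_obj, Functor.op_obj, Functor.comp_map, Functor.op_map,
      Quiver.Hom.unop_op', Quiver.Hom.unop_mk]
    erw [Adjunction.homEquiv_naturality_left_symm]
    simp only [← Functor.LaxMonoidal.μ_natural_right_assoc]
    rw [hφ.natural_middle, Category.assoc, ← N.map_comp]
    have h1 : op (L.map f ▷ L.obj X) ≫ (Functor.OplaxMonoidal.δ L B' X).op =
        (Functor.OplaxMonoidal.δ L B X).op ≫ op (L.map (f ▷ X)) :=
      Quiver.Hom.unop_inj (by simp)
    rw [h1, N.map_comp, ← Category.assoc]
    erw [Adjunction.homEquiv_naturality_right]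
    rfl
  · intro A B X X' f g
    simp only [Equiv.trans_apply, Iso.homCongr_apply, Iso.refl_hom, Iso.refl_inv, Iso.symm_hom,
      Iso.symm_inv, Category.id_comp, Category.comp_id, Functor.mapIso_hom, Functor.mapIso_inv,
      Iso.op_hom, Iso.op_inv, Functor.Monoidal.μIso_hom, Functor.Monoidal.μIso_inv,
      Functor.comp_obj, Functor.op_obj, Functor.comp_map, Functor.op_map,
      Quiver.Hom.unop_op', Quiver.Hom.unop_mk]
    erw [Adjunction.homEquiv_naturality_right_symm]
    rw [← Category.assoc]
    erw [hφ.natural_right]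
    rw [Category.assoc, ← N.map_comp]
    have h1 : op (L.obj B ◁ L.map f) ≫ (Functor.OplaxMonoidal.δ L B X).op =
        (Functor.OplaxMonoidal.δ L B X').op ≫ op (L.map (B ◁ f)) :=
      Quiver.Hom.unop_inj (by simp)
    rw [h1, N.map_comp, ← Category.assoc]
    erw [Adjunction.homEquiv_naturality_right]
    rfl
  · intro A B X Y g
    simp only [Equiv.trans_apply, Iso.homCongr_apply, Iso.refl_hom, Iso.refl_inv, Iso.symm_hom,
      Iso.symm_inv, Category.id_comp, Category.comp_id, Functor.mapIso_hom, Functor.mapIso_inv,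
      Iso.op_hom, Iso.op_inv, Functor.Monoidal.μIso_hom, Functor.Monoidal.μIso_inv,
      Functor.comp_obj, Functor.op_obj, Functor.comp_map, Functor.op_map,
      Quiver.Hom.unop_op', Quiver.Hom.unop_mk]
    erw [Equiv.symm_apply_apply]
    erw [Adjunction.homEquiv_naturality_left_symm]
    have hkey : Functor.LaxMonoidal.μ L A (B ⊗ X) ≫ L.map (α_ A B X).inv =
        L.obj A ◁ Functor.OplaxMonoidal.δ L B X ≫
          (α_ (L.obj A) (L.obj B) (L.obj X)).inv ≫
            Functor.LaxMonoidal.μ L A B ▷ L.obj X ≫ Functor.LaxMonoidal.μ L (A ⊗ B) X := by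
      rw [← Functor.LaxMonoidal.associativity_inv, Functor.Monoidal.whiskerLeft_δ_μ_assoc]
    rw [← Category.assoc (Functor.LaxMonoidal.μ L A B)]
    erw [hφ.natural_right]
    rw [← hφ.natural_left, hφ.assoc, ← Category.assoc (Functor.LaxMonoidal.μ L A (B ⊗ X)), hkey]
    simp only [Category.assoc]
    erw [hφ.natural_middle]
    erw [← Adjunction.homEquiv_naturality_right]
    apply congrArg
    simp only [Category.assoc, ← N.map_comp]
    congr 1
    exact congrArg N.map (Quiver.Hom.unop_inj (by simp))
end

section
/- Let E be a k-quasi-complete Hausdorff locally convex space over ℝ. Equip E with the γ-topology γ(E,E') of uniform convergence on the absolutely convex compact subsets of the Arens dual E'_c (this is a topology on E itself: every point of E defines a continuous linear functional on E'_c, and by the Mackey–Arens theorem every continuous linear functional on E'_c arises this way). Then (E, γ(E,E')) is again k-quasi-complete. -/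
open Filter Topology Set Bornology Pointwise

variable (E : Type*) [AddCommGroup E] [Module ℝ E] [TopologicalSpace E]

/-- The Arens dual `E'_c`: the topological dual with the topology of uniform convergence on
absolutely convex compact subsets of `E`. -/
abbrev ArensDual : Type _ :=
  UniformConvergenceCLM (RingHom.id ℝ) ℝ {K : Set E | Convex ℝ K ∧ Balanced ℝ K ∧ IsCompact K}

/-- The Mackey dual `E'_μ`: the topological dual with the topology of uniform convergence on
absolutely convex weakly compact subsets of `E`. -/
abbrev MackeyDual : Type _ :=
  UniformConvergenceCLM (RingHom.id ℝ) ℝ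
    {K : Set E | Convex ℝ K ∧ Balanced ℝ K ∧ IsCompact (⇑(toWeakSpace ℝ E) '' K)}

/-- The Schwartz ε-product `E ε F`: continuous linear maps from the Arens dual `E'_c` to `F`,
with the topology of uniform convergence on equicontinuous subsets of `E'`. -/
abbrev EpsProduct (F : Type*) [AddCommGroup F] [Module ℝ F] [TopologicalSpace F]
    [IsTopologicalAddGroup F] : Type _ :=
  UniformConvergenceCLM (RingHom.id ℝ) F
    {H : Set (ArensDual E) | Equicontinuous fun f : H => (f.1 : E → ℝ)}

/-- The η-product `E η F`: continuous linear maps from the Mackey dual `E'_μ` to `F`,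
with the topology of uniform convergence on equicontinuous subsets of `E'`. -/
abbrev EtaProduct (F : Type*) [AddCommGroup F] [Module ℝ F] [TopologicalSpace F]
    [IsTopologicalAddGroup F] : Type _ :=
  UniformConvergenceCLM (RingHom.id ℝ) F
    {H : Set (MackeyDual E) | Equicontinuous fun f : H => (f.1 : E → ℝ)}

/-!
The evaluation map `E → (E'_c)'_c` is a linear bijection: it is onto by the Mackey–Arens
argument (bipolar theorem in the weak-* dual of `E'_c`) and one-to-one by Hahn–Banach. Its inverse
is continuous, because the polar of a neighbourhood of `0` is an absolutely convex compact subset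
of `E'_c` (Alaoglu–Bourbaki) and closed absolutely convex sets are their own bipolars. So a
γ-compact `K` is compact in `E`, and its closed absolutely convex hull `C` in `E` is compact by
hypothesis. On the equicontinuous set `C ⊆ (E'_c)'` uniform convergence on compact subsets of
`E'_c` is pointwise convergence (Ascoli), so `C` is still γ-compact; being closed and absolutely
convex, it contains the γ-closed absolutely convex hull of `K`.
-/

open UniformConvergenceCLM

theorem AbsConvex.linearMap_image {M N : Type*} [AddCommGroup M] [Module ℝ M] [AddCommGroup N]
    [Module ℝ N] {S : Set M} (hS : AbsConvex ℝ S) (f : M →ₗ[ℝ] N) :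
    AbsConvex ℝ (f '' S) := by
  refine ⟨?_, hS.2.linear_image f⟩
  rintro a ha _ ⟨_, ⟨x, hx, rfl⟩, rfl⟩
  exact ⟨a • x, hS.1.smul_mem ha hx, map_smul f a x⟩

theorem closure_convexHull_balancedHull_eq {M : Type*} [AddCommGroup M] [Module ℝ M]
    [TopologicalSpace M] [IsTopologicalAddGroup M] [ContinuousSMul ℝ M] (s : Set M) :
    closure (convexHull ℝ (balancedHull ℝ s)) = closedAbsConvexHull ℝ s := by
  rw [closedAbsConvexHull_eq_closure_absConvexHull, absConvexHull_eq_convexHull_balancedHull]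

abbrev absConvexCompacts (M : Type*) [AddCommGroup M] [Module ℝ M] [TopologicalSpace M] :
    Set (Set M) :=
  {K : Set M | Convex ℝ K ∧ Balanced ℝ K ∧ IsCompact K}

section AbsConvexCompacts

variable {M : Type*} [AddCommGroup M] [Module ℝ M] [TopologicalSpace M]

theorem image_smul_closedBall_mem_absConvexCompacts [ContinuousSMul ℝ M] (x : M) :
    (· • x) '' Metric.closedBall (0 : ℝ) 1 ∈ absConvexCompacts M := by
  refine ⟨(convex_closedBall 0 1).linear_image (LinearMap.toSpanSingleton ℝ M x), ?_,
    isCompact_closedBall 0 1 |>.image (continuous_id.smul continuous_const)⟩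
  rintro a ha _ ⟨_, ⟨t, ht, rfl⟩, rfl⟩
  refine ⟨a * t, ?_, mul_smul a t x⟩
  rw [mem_closedBall_zero_iff] at ht ⊢
  exact (norm_mul a t).trans_le (mul_le_one₀ ha (norm_nonneg t) ht)

theorem sUnion_absConvexCompacts [ContinuousSMul ℝ M] : ⋃₀ absConvexCompacts M = univ :=
  eq_univ_of_forall fun x => ⟨_, image_smul_closedBall_mem_absConvexCompacts x,
    1, by simp, one_smul ℝ x⟩

theorem singleton_zero_mem_absConvexCompacts : ({0} : Set M) ∈ absConvexCompacts M :=
  ⟨convex_singleton 0, balanced_zero, isCompact_singleton⟩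

theorem directedOn_absConvexCompacts [IsTopologicalAddGroup M] [ContinuousSMul ℝ M] :
    DirectedOn (· ⊆ ·) (absConvexCompacts M) := by
  rintro s hs t ht
  rcases s.eq_empty_or_nonempty with rfl | hs₀
  · exact ⟨t, ht, empty_subset t, subset_rfl⟩
  rcases t.eq_empty_or_nonempty with rfl | ht₀
  · exact ⟨s, hs, subset_rfl, empty_subset s⟩
  exact ⟨s + t, ⟨hs.1.add ht.1, hs.2.1.add ht.2.1, hs.2.2.add ht.2.2⟩,
    subset_add_left s (ht.2.1.zero_mem ht₀), subset_add_right t (hs.2.1.zero_mem hs₀)⟩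

theorem smul_mem_absConvexCompacts [ContinuousSMul ℝ M] {S : Set M}
    (hS : S ∈ absConvexCompacts M) (c : ℝ) : c • S ∈ absConvexCompacts M :=
  ⟨hS.1.smul c, hS.2.1.smul c, hS.2.2.smul c⟩

end AbsConvexCompacts

section BoundedOnNhds

variable {M : Type*} [AddCommGroup M] [Module ℝ M] [TopologicalSpace M]
  [IsTopologicalAddGroup M] [ContinuousSMul ℝ M]

theorem equicontinuous_of_mapsTo_closedBall {ι F : Type*} [FunLike F M ℝ]
    [LinearMapClass F ℝ M ℝ] {f : ι → F} {V : Set M} (hV : V ∈ 𝓝 0)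
    (hf : ∀ i, MapsTo (f i) V (Metric.closedBall 0 1)) :
    Equicontinuous fun i => ⇑(f i) := by
  refine equicontinuous_of_equicontinuousAt_zero f ?_
  refine Metric.equicontinuousAt_iff_right.2 fun ε hε => ?_
  have hV' : (ε / 2) • V ∈ 𝓝 (0 : M) :=
    (set_smul_mem_nhds_zero_iff (half_pos hε).ne').2 hV
  filter_upwards [hV'] with y ⟨v, hv, hvy⟩ i
  subst hvy
  have hfv : ‖f i v‖ ≤ 1 := mem_closedBall_zero_iff.1 (hf i hv)
  calc dist (f i 0) (f i ((ε / 2) • v)) = ε / 2 * ‖f i v‖ := by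
        rw [map_zero, dist_zero_left, map_smul, smul_eq_mul, norm_mul, Real.norm_of_nonneg
          (half_pos hε).le]
    _ < ε := by nlinarith

theorem LinearMap.continuous_of_mapsTo_closedBall (φ : M →ₗ[ℝ] ℝ) {V : Set M}
    (hV : V ∈ 𝓝 0) (hφ : MapsTo φ V (Metric.closedBall 0 1)) : Continuous φ :=
  (equicontinuous_of_mapsTo_closedBall (f := fun _ : Unit => φ) hV fun _ => hφ).continuous ()

end BoundedOnNhds

/-- Ascoli: on an equicontinuous set of functionals, uniform convergence on the compact sets of a
covering agrees with pointwise convergence. -/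
theorem UniformConvergenceCLM.isCompact_of_equicontinuous {M : Type*} [AddCommGroup M]
    [Module ℝ M] [TopologicalSpace M] {𝔖 : Set (Set M)} (h𝔖 : ⋃₀ 𝔖 = univ)
    (h𝔖c : ∀ K ∈ 𝔖, IsCompact K) {S : Set (UniformConvergenceCLM (RingHom.id ℝ) ℝ 𝔖)}
    (hSe : Equicontinuous fun f : S => ⇑f.1) (hSc : IsCompact (DFunLike.coe '' S)) :
    IsCompact S := by
  have hind : IsInducing fun f : S => ⇑f.1 :=
    (EquicontinuousOn.isInducing_uniformOnFun_iff_pi h𝔖 h𝔖c fun K _ => hSe.equicontinuousOn K).1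
      ((isEmbedding_coeFn (RingHom.id ℝ) ℝ 𝔖).isInducing.comp IsInducing.subtypeVal)
  rw [isCompact_iff_isCompact_univ, hind.isCompact_iff, image_univ]
  simpa [← image_eq_range] using hSc

/-- The bipolar theorem. -/
theorem mem_of_forall_polar_norm_le_one {W : Type*} [AddCommGroup W] [Module ℝ W]
    [TopologicalSpace W] [IsTopologicalAddGroup W] [ContinuousSMul ℝ W]
    [LocallyConvexSpace ℝ W] {D : Set W} (hDc : IsClosed D) (hD : AbsConvex ℝ D)
    (h0 : (0 : W) ∈ D) {x : W}
    (hx : ∀ g : W →L[ℝ] ℝ, MapsTo g D (Metric.closedBall 0 1) → ‖g x‖ ≤ 1) : x ∈ D := by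
  by_contra hxD
  obtain ⟨f, u, hfD, hfx⟩ := geometric_hahn_banach_closed_point hD.2 hDc hxD
  have hu : 0 < u := by simpa using hfD 0 h0
  have hnorm (y : W) : ‖(u⁻¹ • f) y‖ ≤ 1 ↔ |f y| ≤ u := by
    rw [smul_apply, smul_eq_mul, norm_mul, norm_inv, Real.norm_of_nonneg hu.le,
      inv_mul_le_iff₀ hu, mul_one, Real.norm_eq_abs]
  have hfD' : MapsTo (u⁻¹ • f) D (Metric.closedBall 0 1) := fun a ha => by
    have hna : f (-a) < u := hfD _ (hD.1.neg_mem_iff.2 ha)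
    rw [map_neg] at hna
    exact mem_closedBall_zero_iff.2 ((hnorm a).2 (abs_le.2 ⟨by linarith, (hfD a ha).le⟩))
  have hfx' := (hnorm x).1 (hx _ hfD')
  linarith [le_abs_self (f x)]

namespace ArensDual

variable {M : Type*} [AddCommGroup M] [Module ℝ M] [TopologicalSpace M] [ContinuousSMul ℝ M]

instance : T2Space (ArensDual M) :=
  UniformConvergenceCLM.t2Space _ _ _ sUnion_absConvexCompacts

instance : ContinuousEvalConst (ArensDual M) M ℝ :=
  UniformConvergenceCLM.continuousEvalConst _ _ _ sUnion_absConvexCompacts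

noncomputable def eval : M →ₗ[ℝ] ArensDual (ArensDual M) where
  toFun x := ⟨⟨⟨fun f : ArensDual M => f x, fun _ _ => rfl⟩, fun _ _ => rfl⟩,
    continuous_eval_const x⟩
  map_add' x y := ContinuousLinearMap.ext fun f => map_add f x y
  map_smul' c x := ContinuousLinearMap.ext fun f => map_smul f c x

variable [IsTopologicalAddGroup M]

instance : ContinuousSMul ℝ (ArensDual M) :=
  UniformConvergenceCLM.continuousSMul _ _ _ fun _ hS => hS.2.2.isVonNBounded ℝ

/-- Alaoglu–Bourbaki for the Arens dual. -/
theorem isCompact_polar {V : Set M} (hV : V ∈ 𝓝 0) :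
    IsCompact {f : ArensDual M | MapsTo f V (Metric.closedBall 0 1)} := by
  refine UniformConvergenceCLM.isCompact_of_equicontinuous sUnion_absConvexCompacts
    (fun _ hK => hK.2.2) (equicontinuous_of_mapsTo_closedBall hV fun f => f.2) ?_
  have himage : DFunLike.coe '' {f : ArensDual M | MapsTo f V (Metric.closedBall 0 1)} =
      range ((⇑) : (M →ₗ[ℝ] ℝ) → M → ℝ) ∩ {φ | MapsTo φ V (Metric.closedBall 0 1)} := by
    ext φ
    constructor
    · rintro ⟨f, hf, rfl⟩
      exact ⟨⟨f.toLinearMap, rfl⟩, hf⟩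
    · rintro ⟨⟨φ, rfl⟩, hφ⟩
      exact ⟨⟨φ, φ.continuous_of_mapsTo_closedBall hV hφ⟩, hφ, rfl⟩
  have hbound (x : M) : ∃ r, ∀ φ : M →ₗ[ℝ] ℝ, MapsTo φ V (Metric.closedBall 0 1) → ‖φ x‖ ≤ r := by
    obtain ⟨r, -, hr⟩ := (absorbent_nhds_zero (𝕜 := ℝ) hV x).exists_pos
    obtain ⟨v, hv, hvx⟩ := hr r (Real.le_norm_self r) rfl
    refine ⟨‖r‖, fun φ hφ => ?_⟩
    rw [← hvx, map_smul, smul_eq_mul, norm_mul]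
    exact mul_le_of_le_one_right (norm_nonneg r) (mem_closedBall_zero_iff.1 (hφ hv))
  choose r hr using hbound
  rw [himage]
  refine (isCompact_univ_pi fun x => isCompact_closedBall 0 (r x)).of_isClosed_subset
    ((LinearMap.isClosed_range_coe _ _ _).inter
      (Metric.isClosed_closedBall.setOfPred_mapsTo fun _ _ => continuous_apply _)) ?_
  rintro _ ⟨⟨φ, rfl⟩, hφ⟩ x -
  exact mem_closedBall_zero_iff.2 (hr x φ hφ)

theorem polar_mem_absConvexCompacts {V : Set M} (hV : V ∈ 𝓝 0) :
    {f : ArensDual M | MapsTo f V (Metric.closedBall 0 1)} ∈ absConvexCompacts (ArensDual M) :=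
  ⟨fun _ hf _ hg _ _ ha hb hab _ hx => convex_closedBall 0 1 (hf hx) (hg hx) ha hb hab,
    fun _ ha _ ⟨_, hg, hgf⟩ _ hx => hgf ▸ balanced_closedBall_zero.smul_mem ha (hg hx),
    isCompact_polar hV⟩

theorem exists_norm_le_one_on_polar (T : ArensDual (ArensDual M)) :
    ∃ S ∈ absConvexCompacts M, (0 : M) ∈ S ∧
      ∀ f : ArensDual M, MapsTo f S (Metric.closedBall 0 1) → ‖T f‖ ≤ 1 := by
  have hT : ⇑T ⁻¹' Metric.closedBall 0 1 ∈ 𝓝 (0 : ArensDual M) :=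
    (map_continuous T).continuousAt.preimage_mem_nhds
      (by simpa using Metric.closedBall_mem_nhds (0 : ℝ) one_pos)
  obtain ⟨⟨S, δ⟩, ⟨hS, hδ⟩, hST⟩ := (hasBasis_nhds_zero_of_basis (RingHom.id ℝ) ℝ
    (absConvexCompacts M) ⟨_, singleton_zero_mem_absConvexCompacts⟩ directedOn_absConvexCompacts
    Metric.nhds_basis_closedBall).mem_iff.1 hT
  obtain ⟨S₀, hS₀, hSS₀, h0S₀⟩ := directedOn_absConvexCompacts _ hS _ singleton_zero_mem_absConvexCompacts
  refine ⟨δ⁻¹ • S₀, smul_mem_absConvexCompacts hS₀ _,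
    by simpa using smul_mem_smul_set (a := δ⁻¹) (h0S₀ rfl), fun f hf => ?_⟩
  refine mem_closedBall_zero_iff.1 (hST fun x hx => ?_)
  have hfx := mem_closedBall_zero_iff.1 (hf (smul_mem_smul_set (a := δ⁻¹) (hSS₀ hx)))
  rw [map_smul, smul_eq_mul, norm_mul, norm_inv, Real.norm_of_nonneg hδ.le,
    inv_mul_le_iff₀ hδ, mul_one] at hfx
  exact mem_closedBall_zero_iff.2 hfx

/-- **Mackey–Arens** for the Arens dual. -/
theorem eval_surjective : Function.Surjective (eval : M →ₗ[ℝ] ArensDual (ArensDual M)) := by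
  intro T
  obtain ⟨S, hS, h0, hTS⟩ := exists_norm_le_one_on_polar T
  -- `WeakDual` is a type synonym, so the `WeakBilin` instance is not found automatically
  have : LocallyConvexSpace ℝ (WeakDual ℝ (ArensDual M)) := WeakBilin.locallyConvexSpace
  let ι : M →ₗ[ℝ] WeakDual ℝ (ArensDual M) := eval
  have hιS : IsCompact (ι '' S) :=
    hS.2.2.image (WeakDual.continuous_of_continuous_eval fun f => map_continuous f)
  obtain ⟨x, -, hx⟩ : (T : WeakDual ℝ (ArensDual M)) ∈ ι '' S := by
    refine mem_of_forall_polar_norm_le_one hιS.isClosed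
      (AbsConvex.linearMap_image ⟨hS.2.1, hS.1⟩ ι) ⟨0, h0, map_zero ι⟩ fun g hg => ?_
    obtain ⟨f, rfl⟩ := LinearMap.dualEmbedding_surjective (topDualPairing ℝ (ArensDual M)) g
    exact hTS f fun y hy => hg ⟨y, hy, rfl⟩
  exact ⟨x, hx⟩

theorem isCompact_image_eval {S : Set M} (hS : S ∈ absConvexCompacts M) :
    IsCompact (eval '' S) := by
  refine UniformConvergenceCLM.isCompact_of_equicontinuous sUnion_absConvexCompacts
    (fun _ hK => hK.2.2) (equicontinuous_of_mapsTo_closedBall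
      (eventually_nhds_zero_mapsTo (RingHom.id ℝ) hS (Metric.closedBall_mem_nhds 0 one_pos))
      ?_) ?_
  · rintro ⟨_, x, hx, rfl⟩ f hf
    exact hf hx
  · rw [← image_comp]
    exact hS.2.2.image (continuous_pi fun f => map_continuous f)

variable [LocallyConvexSpace ℝ M] [T2Space M]

theorem eval_injective : Function.Injective (eval : M →ₗ[ℝ] ArensDual (ArensDual M)) := by
  refine (injective_iff_map_eq_zero _).2 fun x hx => by_contra fun hx₀ => ?_
  obtain ⟨f, hf⟩ := SeparatingDual.exists_ne_zero (R := ℝ) hx₀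
  exact hf (DFunLike.congr_fun hx f)

variable (M) in
noncomputable def evalEquiv : M ≃ₗ[ℝ] ArensDual (ArensDual M) :=
  LinearEquiv.ofBijective eval ⟨eval_injective, eval_surjective⟩

/-- The γ-topology is finer than the original one: by the bipolar theorem, a closed absolutely
convex neighbourhood `V` contains every point on which the polar of `V`, a compact subset of the
Arens dual, is bounded by `1`. -/
theorem continuous_evalEquiv_symm : Continuous (evalEquiv M).symm := by
  refine continuous_of_continuousAt_zero (evalEquiv M).symm ?_
  rw [ContinuousAt, map_zero]
  refine (nhds_hasBasis_absConvex_closed ℝ M).tendsto_right_iff.2 fun V ⟨hV, hVc, hVa⟩ => ?_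
  filter_upwards [eventually_nhds_zero_mapsTo (RingHom.id ℝ) (polar_mem_absConvexCompacts hV)
    (Metric.closedBall_mem_nhds 0 one_pos)] with T hT
  refine mem_of_forall_polar_norm_le_one hVc hVa (mem_of_mem_nhds hV) fun g hg => ?_
  have hTg : T g = g ((evalEquiv M).symm T) :=
    DFunLike.congr_fun ((evalEquiv M).apply_symm_apply T).symm g
  exact hTg ▸ mem_closedBall_zero_iff.1 (hT hg)

end ArensDual

/-- If `E` is a k-quasi-complete Hausdorff locally convex space over `ℝ`,
then `E` equipped with its γ-topology, i.e. the double Arens dual `(E'_c)'_c`, is again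
k-quasi-complete. -/
theorem kQuasiComplete_doubleArensDual
    (E : Type*) [AddCommGroup E] [Module ℝ E] [TopologicalSpace E] [IsTopologicalAddGroup E]
    [ContinuousSMul ℝ E] [LocallyConvexSpace ℝ E] [T2Space E]
    (hE : KQuasiComplete E) :
    KQuasiComplete (ArensDual (ArensDual E)) := by
  intro K hK
  set e := ArensDual.evalEquiv E
  set C := closedAbsConvexHull ℝ (e.symm '' K)
  have hC : IsCompact C := by
    simpa only [closure_convexHull_balancedHull_eq] using
      hE _ (hK.image ArensDual.continuous_evalEquiv_symm)
  have heC : IsCompact (e '' C) := ArensDual.isCompact_image_eval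
    ⟨absConvex_convexClosedHull.2, absConvex_convexClosedHull.1, hC⟩
  have hKeC : K ⊆ e '' C := fun T hT =>
    ⟨e.symm T, subset_closedAbsConvexHull (mem_image_of_mem _ hT), e.apply_symm_apply T⟩
  rw [closure_convexHull_balancedHull_eq]
  exact heC.of_isClosed_subset isClosed_closedAbsConvexHull <| closedAbsConvexHull_min hKeC
    (absConvex_convexClosedHull.linearMap_image e.toLinearMap) heC.isClosed
end

section
/- Let E and F be Hausdorff locally convex spaces over ℝ. For every u in E η F and every y' ∈ F', the linear functional x' ↦ y'(u(x')) on E' is the evaluation at a unique point u^t(y') of E; the resulting transpose map u^t : F'_μ → E is linear and continuous, so u^t ∈ F η E; and the map u ↦ u^t is a topological isomorphism from E η F onto F η E. -/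
open Filter Topology Set Bornology Pointwise

variable (E : Type*) [AddCommGroup E] [Module ℝ E] [TopologicalSpace E]

/-!
By Mackey–Arens, the continuous functional `y' ∘ u` on `E'_μ` is evaluation at a unique point
`uᵗ y'` of `E`, so that `x' (uᵗ y') = y' (u x')`. Both continuity statements then come from the
bipolar theorem in `E`: for a closed absolutely convex neighbourhood `U` of `0`, the polar `U°` is
equicontinuous and weak-* compact (Alaoglu–Bourbaki), and `u` is continuous from the weak-*
topology to `σ(F, F')`, so `u(U°)` is absolutely convex and weakly compact. Hence `uᵗ` maps the
polar of `u(U°)`, a neighbourhood of `0` in `F'_μ`, into `U°° = U`; and when `u` maps `U°` into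
the polar of an equicontinuous `H ⊆ F'` (a neighbourhood of `0` in `F`), `uᵗ` maps `H` into `U`.
Transposing twice gives back `u`.
-/

section LocallyConvex

variable {X : Type*} [AddCommGroup X] [Module ℝ X]

theorem AbsConvex.linear_image {Y : Type*} [AddCommGroup Y] [Module ℝ Y] {s : Set X}
    (hs : AbsConvex ℝ s) (f : X →ₗ[ℝ] Y) : AbsConvex ℝ (f '' s) :=
  ⟨fun a ha => by rw [← image_smul_set]; exact image_mono (hs.1 a ha), hs.2.linear_image f⟩

theorem LinearMap.absConvex_polar {Y : Type*} [AddCommGroup Y] [Module ℝ Y]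
    (B : X →ₗ[ℝ] Y →ₗ[ℝ] ℝ) (s : Set X) : AbsConvex ℝ (B.polar s) := by
  rw [polar_eq_biInter_preimage]
  exact AbsConvex.iInter₂ fun x _ =>
    ⟨balanced_closedBall_zero.mulActionHom_preimage (B x).toMulActionHom,
      (convex_closedBall 0 1).linear_preimage (B x)⟩

variable [TopologicalSpace X] [IsTopologicalAddGroup X] [ContinuousSMul ℝ X]

theorem LinearMap.continuous_of_forall_norm_le_one (φ : X →ₗ[ℝ] ℝ) {U : Set X}
    (hU : U ∈ 𝓝 0) (hφ : ∀ x ∈ U, ‖φ x‖ ≤ 1) : Continuous φ := by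
  have hcont : Continuous φ.toSeminorm :=
    Seminorm.continuous' (r := 1) (mem_of_superset hU fun x hx => by simpa using hφ x hx)
  refine continuous_of_continuousAt_zero φ ?_
  rw [ContinuousAt, map_zero, tendsto_zero_iff_norm_tendsto_zero]
  simpa [coe_toSeminorm] using hcont.tendsto 0

theorem StrongDual.equicontinuous_polar {U : Set X} (hU : U ∈ 𝓝 0) :
    Equicontinuous fun x' : StrongDual.polar ℝ U => (x'.1 : X → ℝ) := by
  refine equicontinuous_of_equicontinuousAt_zero (fun x' : StrongDual.polar ℝ U => x'.1) ?_
  rw [Metric.equicontinuousAt_iff_right]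
  intro ε hε
  filter_upwards [(set_smul_mem_nhds_zero_iff (half_pos hε).ne').2 hU]
  rintro _ ⟨x, hx, rfl⟩ x'
  calc dist (x'.1 0) (x'.1 ((ε / 2) • x)) = ε / 2 * ‖x'.1 x‖ := by
        simp [hε.le]
    _ ≤ ε / 2 * 1 := by gcongr; exact x'.2 x hx
    _ < ε := by linarith

/-- **Alaoglu–Bourbaki**. -/
theorem WeakDual.isCompact_polar_of_mem_nhds_zero {U : Set X} (hU : U ∈ 𝓝 0) :
    IsCompact (WeakDual.polar ℝ U) := by
  have hemb : IsEmbedding fun (x' : WeakDual ℝ X) (x : X) => x' x :=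
    WeakBilin.isEmbedding fun _ _ h => ContinuousLinearMap.coe_injective h
  have himage : (fun (x' : WeakDual ℝ X) (x : X) => x' x) '' WeakDual.polar ℝ U =
      range ((⇑) : (X →ₗ[ℝ] ℝ) → X → ℝ) ∩ {g | ∀ x ∈ U, ‖g x‖ ≤ 1} := by
    ext g
    constructor
    · rintro ⟨x', hx', rfl⟩
      exact ⟨⟨x', rfl⟩, hx'⟩
    · rintro ⟨⟨φ, rfl⟩, hφ⟩
      exact ⟨⟨φ, φ.continuous_of_forall_norm_le_one hU hφ⟩, hφ, rfl⟩
  choose r hr using fun x => (absorbent_nhds_zero (𝕜 := ℝ) hU).gauge_set_nonempty (x := x)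
  have hbound : range ((⇑) : (X →ₗ[ℝ] ℝ) → X → ℝ) ∩ {g | ∀ x ∈ U, ‖g x‖ ≤ 1} ⊆
      univ.pi fun x => Metric.closedBall 0 (r x) := by
    rintro _ ⟨⟨φ, rfl⟩, hφ⟩ x -
    obtain ⟨u, hu, hux : r x • u = x⟩ := (hr x).2
    rw [mem_closedBall_zero_iff]
    calc ‖φ x‖ = ‖φ (r x • u)‖ := by rw [hux]
      _ = r x * ‖φ u‖ := by rw [map_smul, norm_smul, Real.norm_of_nonneg (hr x).1.le]
      _ ≤ r x := mul_le_of_le_one_right (hr x).1.le (hφ u hu)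
  rw [hemb.isCompact_iff, himage]
  refine (isCompact_univ_pi fun x => ProperSpace.isCompact_closedBall 0 (r x)).of_isClosed_subset
    ?_ hbound
  refine (LinearMap.isClosed_range_coe X ℝ (RingHom.id ℝ)).inter ?_
  simp only [ofPred_forall]
  exact isClosed_biInter fun x _ => isClosed_le (continuous_apply x).norm continuous_const

/-- The **bipolar theorem**. -/
theorem mem_of_forall_mem_polar [LocallyConvexSpace ℝ X] {U : Set X} (hUc : IsClosed U)
    (hUconv : Convex ℝ U) (hUneg : ∀ x ∈ U, -x ∈ U) (h0 : (0 : X) ∈ U) {z : X}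
    (hz : ∀ x' ∈ StrongDual.polar ℝ U, ‖x' z‖ ≤ 1) : z ∈ U := by
  by_contra hzU
  obtain ⟨φ, t, hφU, hφz⟩ := geometric_hahn_banach_closed_point hUconv hUc hzU
  have ht : 0 < t := by simpa using hφU 0 h0
  have hpolar : t⁻¹ • φ ∈ StrongDual.polar ℝ U := by
    intro x hx
    have hneg : φ (-x) < t := hφU _ (hUneg x hx)
    rw [map_neg] at hneg
    have : |φ x| ≤ t := abs_le.2 ⟨by linarith, (hφU x hx).le⟩
    simpa [abs_of_pos ht, inv_mul_le_one₀ ht] using this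
  have := hz _ hpolar
  simp only [smul_apply, smul_eq_mul, norm_mul, norm_inv, Real.norm_eq_abs,
    abs_of_pos ht, inv_mul_le_one₀ ht] at this
  linarith [le_abs_self (φ z)]

end LocallyConvex

section MackeyDual
variable {E : Type*} [AddCommGroup E] [Module ℝ E] [TopologicalSpace E]

theorem exists_mem_eq_apply_of_forall_mem_polar {K : Set E} (hK : AbsConvex ℝ K)
    (hKc : IsCompact (toWeakSpace ℝ E '' K)) (hK₀ : K.Nonempty) (f : StrongDual ℝ E →ₗ[ℝ] ℝ)
    (hf : ∀ x' ∈ StrongDual.polar ℝ K, ‖f x'‖ ≤ 1) : ∃ z ∈ K, ∀ x', f x' = x' z := by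
  -- `WeakBilin B` is the algebraic dual of `E'` with the topology `σ((E')^*, E')`: `K` embeds in
  -- it as a compact set, and its continuous dual is `E'`.
  let B : Module.Dual ℝ (StrongDual ℝ E) →ₗ[ℝ] Module.Dual ℝ (StrongDual ℝ E) := LinearMap.id
  let j : E →ₗ[ℝ] WeakBilin B := (topDualPairing ℝ E).flip
  have : T2Space (WeakBilin B) := (WeakBilin.isEmbedding (B := B) fun _ _ h => h).t2Space
  have hjK : IsCompact (j '' K) := by
    have hcont : Continuous fun z : WeakSpace ℝ E => j ((toWeakSpace ℝ E).symm z) :=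
      WeakBilin.continuous_of_continuous_eval _ fun x' => WeakBilin.eval_continuous _ x'
    have := hKc.image hcont
    rwa [image_image] at this
  have hjK_neg : ∀ g ∈ j '' K, -g ∈ j '' K := by
    rintro _ ⟨z, hz, rfl⟩
    exact ⟨-z, hK.1.neg_mem_iff.2 hz, map_neg j z⟩
  obtain ⟨z, hz, hfz⟩ : (f : WeakBilin B) ∈ j '' K := by
    refine mem_of_forall_mem_polar hjK.isClosed (hK.2.linear_image j) hjK_neg
      ⟨0, hK.1.zero_mem hK₀, map_zero j⟩ fun ψ hψ => ?_
    obtain ⟨x', rfl⟩ := LinearMap.dualEmbedding_surjective B ψ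
    exact hf x' fun x hx => hψ _ ⟨x, hx, rfl⟩
  exact ⟨z, hz, fun x' => (LinearMap.congr_fun hfz x').symm⟩

theorem mackeyDual_directedOn : DirectedOn (· ⊆ ·)
    {K : Set E | Convex ℝ K ∧ Balanced ℝ K ∧ IsCompact (⇑(toWeakSpace ℝ E) '' K)} := by
  rintro K₁ h₁ K₂ h₂
  rcases K₁.eq_empty_or_nonempty with rfl | hK₁
  · exact ⟨K₂, h₂, empty_subset _, subset_rfl⟩
  rcases K₂.eq_empty_or_nonempty with rfl | hK₂
  · exact ⟨K₁, h₁, subset_rfl, empty_subset _⟩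
  refine ⟨K₁ + K₂, ⟨h₁.1.add h₂.1, h₁.2.1.add h₂.2.1, ?_⟩,
    subset_add_left _ (h₂.2.1.zero_mem hK₂), subset_add_right _ (h₁.2.1.zero_mem hK₁)⟩
  rw [image_add]
  exact h₁.2.2.add h₂.2.2

theorem mackeyDual_hasBasis_nhds_zero :
    (𝓝 (0 : MackeyDual E)).HasBasis
      (fun Kε : Set E × ℝ =>
        (Convex ℝ Kε.1 ∧ Balanced ℝ Kε.1 ∧ IsCompact (⇑(toWeakSpace ℝ E) '' Kε.1)) ∧ 0 < Kε.2)
      fun Kε => {x' : MackeyDual E | ∀ x ∈ Kε.1, x' x ∈ Metric.ball 0 Kε.2} :=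
  UniformConvergenceCLM.hasBasis_nhds_zero_of_basis _ _ _
    ⟨∅, show Convex ℝ (∅ : Set E) ∧ _ from ⟨convex_empty, balanced_empty, by simp⟩⟩
    mackeyDual_directedOn Metric.nhds_basis_ball

/-- **Mackey–Arens**: the dual of `E'_μ` is `E`. -/
theorem MackeyDual.exists_eq_apply (f : MackeyDual E →L[ℝ] ℝ) :
    ∃ z : E, ∀ x' : MackeyDual E, f x' = x' z := by
  obtain ⟨⟨K, ε⟩, ⟨hK, hε : 0 < ε⟩, hKf⟩ := mackeyDual_hasBasis_nhds_zero.mem_iff.1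
    (f.continuous.tendsto' 0 0 (map_zero f) (Metric.ball_mem_nhds 0 one_pos))
  obtain ⟨K', hK', hKK', h0K'⟩ := mackeyDual_directedOn K hK {0}
    ⟨convex_singleton 0, fun a _ => by simp, by simp⟩
  have hε2 : 0 < ε / 2 := half_pos hε
  have hf : ∀ x' ∈ StrongDual.polar ℝ K', ‖((ε / 2) • f.toLinearMap) x'‖ ≤ 1 := by
    intro (x' : MackeyDual E) hx'
    have hsmall : ‖f ((ε / 2) • x')‖ < 1 := by
      refine mem_ball_zero_iff.1 (hKf fun x hx => mem_ball_zero_iff.2 ?_)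
      have hx'x : ‖x' x‖ ≤ 1 := hx' x (hKK' hx)
      change ‖ε / 2 * x' x‖ < ε
      rw [norm_mul, Real.norm_of_nonneg hε2.le]
      nlinarith
    rw [map_smul] at hsmall
    exact hsmall.le
  obtain ⟨z, -, hz⟩ := exists_mem_eq_apply_of_forall_mem_polar ⟨hK'.2.1, hK'.1⟩ hK'.2.2
    ⟨0, h0K' rfl⟩ _ hf
  refine ⟨(ε / 2)⁻¹ • z, fun x' => ?_⟩
  have hzx : ε / 2 * f x' = x' z := hz x'
  rw [map_smul, ← hzx, smul_eq_mul, inv_mul_cancel_left₀ hε2.ne']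

end MackeyDual

namespace EtaProduct

variable {E F : Type*} [AddCommGroup E] [Module ℝ E] [TopologicalSpace E]
  [AddCommGroup F] [Module ℝ F] [TopologicalSpace F] [IsTopologicalAddGroup F]

noncomputable def transposeFun (u : EtaProduct E F) (y' : MackeyDual F) : E :=
  (MackeyDual.exists_eq_apply ((y' : F →L[ℝ] ℝ).comp u)).choose

theorem apply_transposeFun (u : EtaProduct E F) (y' : MackeyDual F) (x' : MackeyDual E) :
    x' (u.transposeFun y') = y' (u x') :=
  ((MackeyDual.exists_eq_apply ((y' : F →L[ℝ] ℝ).comp u)).choose_spec x').symm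

variable [IsTopologicalAddGroup E] [ContinuousSMul ℝ E]

theorem isCompact_image_polar (u : EtaProduct E F) {U : Set E} (hU : U ∈ 𝓝 0) :
    IsCompact (toWeakSpace ℝ F '' (u '' StrongDual.polar ℝ U)) := by
  have hcont : Continuous fun x' : WeakDual ℝ E => toWeakSpace ℝ F (u x') := by
    refine WeakBilin.continuous_of_continuous_eval _ fun y' => ?_
    have : (fun x' : WeakDual ℝ E => y' (u x')) = fun x' => x' (u.transposeFun y') :=
      funext fun x' => (u.apply_transposeFun y' x').symm
    exact this ▸ WeakBilin.eval_continuous _ (u.transposeFun y')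
  convert (WeakDual.isCompact_polar_of_mem_nhds_zero hU).image hcont using 1
  exact image_image _ _ _

variable [LocallyConvexSpace ℝ E]

theorem transposeFun_mem (u : EtaProduct E F) {U : Set E}
    (hUc : IsClosed U) (hU : AbsConvex ℝ U) (h0 : (0 : E) ∈ U) {y' : MackeyDual F}
    (hy' : ∀ x' ∈ StrongDual.polar ℝ U, ‖y' (u x')‖ ≤ 1) : u.transposeFun y' ∈ U :=
  mem_of_forall_mem_polar hUc hU.2 (fun _ hx => hU.1.neg_mem_iff.2 hx) h0
    fun (x' : MackeyDual E) hx' => u.apply_transposeFun y' x' ▸ hy' x' hx'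

variable [T2Space E]

theorem eq_transposeFun (u : EtaProduct E F) {y' : MackeyDual F} {z : E}
    (hz : ∀ x' : MackeyDual E, y' (u x') = x' z) : z = u.transposeFun y' :=
  SeparatingDual.eq_iff_forall_dual_eq.2 fun (x' : MackeyDual E) =>
    (hz x').symm.trans (u.apply_transposeFun y' x').symm

theorem transposeFun_add (u : EtaProduct E F) (y₁ y₂ : MackeyDual F) :
    u.transposeFun (y₁ + y₂) = u.transposeFun y₁ + u.transposeFun y₂ :=
  (u.eq_transposeFun fun x' => by simp [apply_transposeFun]).symm

theorem transposeFun_smul (u : EtaProduct E F) (c : ℝ) (y' : MackeyDual F) :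
    u.transposeFun (c • y') = c • u.transposeFun y' :=
  (u.eq_transposeFun fun x' => by simp [apply_transposeFun]).symm

theorem continuous_transposeFun (u : EtaProduct E F) : Continuous u.transposeFun := by
  refine continuous_of_continuousAt_zero (AddMonoidHom.mk' _ u.transposeFun_add) ?_
  rw [ContinuousAt, map_zero]
  refine (nhds_hasBasis_absConvex_closed ℝ E).tendsto_right_iff.2 fun U ⟨hU, hUc, hUac⟩ => ?_
  have hK : u '' StrongDual.polar ℝ U ∈
      {K : Set F | Convex ℝ K ∧ Balanced ℝ K ∧ IsCompact (⇑(toWeakSpace ℝ F) '' K)} :=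
    have hac := (LinearMap.absConvex_polar _ U).linear_image (u : MackeyDual E →ₗ[ℝ] F)
    ⟨hac.2, hac.1, u.isCompact_image_polar hU⟩
  filter_upwards [UniformConvergenceCLM.eventually_nhds_zero_mapsTo _ hK
    (Metric.closedBall_mem_nhds (0 : ℝ) one_pos)] with y' hy'
  exact u.transposeFun_mem hUc hUac (mem_of_mem_nhds hU) fun x' hx' =>
    mem_closedBall_zero_iff.1 (hy' ⟨x', hx', rfl⟩)

noncomputable def transpose (u : EtaProduct E F) : EtaProduct F E :=
  UniformConvergenceCLM.ofFun _ _ _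
    ⟨⟨⟨u.transposeFun, u.transposeFun_add⟩, u.transposeFun_smul⟩, u.continuous_transposeFun⟩

@[simp]
theorem apply_transpose (u : EtaProduct E F) (y' : MackeyDual F) (x' : MackeyDual E) :
    x' (u.transpose y') = y' (u x') :=
  u.apply_transposeFun y' x'

theorem eq_transpose (u : EtaProduct E F) {y' : MackeyDual F} {z : E}
    (hz : ∀ x' : MackeyDual E, y' (u x') = x' z) : z = u.transpose y' :=
  u.eq_transposeFun hz

theorem transpose_add (u v : EtaProduct E F) : (u + v).transpose = u.transpose + v.transpose := by
  ext y'
  exact ((u + v).eq_transpose fun x' => by simp).symm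

variable [ContinuousSMul ℝ F]

theorem transpose_smul (c : ℝ) (u : EtaProduct E F) : (c • u).transpose = c • u.transpose := by
  ext y'
  exact ((c • u).eq_transpose fun x' => by simp).symm

noncomputable def transposeₗ : EtaProduct E F →ₗ[ℝ] EtaProduct F E where
  toFun := transpose
  map_add' := transpose_add
  map_smul' := transpose_smul

theorem continuous_transposeₗ :
    Continuous (transposeₗ : EtaProduct E F →ₗ[ℝ] EtaProduct F E) := by
  refine continuous_of_continuousAt_zero transposeₗ ?_
  rw [ContinuousAt, map_zero,
    show 𝓝 (0 : EtaProduct F E) = _ from UniformConvergenceCLM.nhds_zero_eq _ _ _]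
  simp only [tendsto_iInf, tendsto_principal]
  intro H hH W hW
  obtain ⟨U, ⟨hU, hUc, hUac⟩, hUW⟩ := (nhds_hasBasis_absConvex_closed ℝ E).mem_iff.1 hW
  have hH₀ : ∀ᶠ y in 𝓝 (0 : F), ∀ y' : H, ‖y'.1 y‖ < 1 := by
    filter_upwards [Metric.equicontinuousAt_iff_right.1 (hH 0) 1 one_pos] with y hy y'
    simpa using hy y'
  filter_upwards [UniformConvergenceCLM.eventually_nhds_zero_mapsTo _
    (StrongDual.equicontinuous_polar hU) hH₀] with u hu y' hy'
  exact hUW (u.transposeFun_mem hUc hUac (mem_of_mem_nhds hU) fun x' hx' =>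
    (hu hx' ⟨y', hy'⟩).le)

variable [LocallyConvexSpace ℝ F] [T2Space F]

theorem transpose_transpose (u : EtaProduct E F) : u.transpose.transpose = u := by
  ext x'
  exact SeparatingDual.eq_iff_forall_dual_eq.2 fun (y' : MackeyDual F) =>
    (u.transpose.apply_transpose x' y').trans (u.apply_transpose y' x')

noncomputable def transposeEquiv : EtaProduct E F ≃L[ℝ] EtaProduct F E :=
  .equivOfInverse ⟨transposeₗ, continuous_transposeₗ⟩ ⟨transposeₗ, continuous_transposeₗ⟩
    transpose_transpose transpose_transpose

end EtaProduct

/-- For Hausdorff locally convex spaces `E`, `F` over `ℝ`: for every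
`u ∈ E η F` and `y' ∈ F'`, the functional `x' ↦ y'(u x')` on `E'` is evaluation at a unique
point of `E`; the resulting transpose is linear continuous (an element of `F η E`), and
transposition is a topological isomorphism `E η F ≅ F η E`. -/
theorem etaProduct_transpose_symm
    (E F : Type*)
    [AddCommGroup E] [Module ℝ E] [TopologicalSpace E] [IsTopologicalAddGroup E]
    [ContinuousSMul ℝ E] [LocallyConvexSpace ℝ E] [T2Space E]
    [AddCommGroup F] [Module ℝ F] [TopologicalSpace F] [IsTopologicalAddGroup F]
    [ContinuousSMul ℝ F] [LocallyConvexSpace ℝ F] [T2Space F] :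
    (∀ (u : EtaProduct E F) (y' : MackeyDual F),
      ∃! z : E, ∀ x' : MackeyDual E, y' (u x') = x' z) ∧
    ∃ e : EtaProduct E F ≃L[ℝ] EtaProduct F E,
      ∀ (u : EtaProduct E F) (y' : MackeyDual F) (x' : MackeyDual E),
        x' ((e u) y') = y' (u x') :=
  ⟨fun u y' => ⟨u.transpose y', fun x' => (u.apply_transpose y' x').symm,
    fun _ hz => u.eq_transpose hz⟩,
   EtaProduct.transposeEquiv, EtaProduct.apply_transpose⟩
end

section
/- Let f : F₁ → E₁ be a continuous linear map between Hausdorff locally convex spaces over ℝ and let E₂ be any Hausdorff locally convex space over ℝ. Then the transpose f^t : (E₁)'_c → (F₁)'_c, x' ↦ x' ∘ f, is continuous, and the induced map f ε Id : F₁ ε E₂ → E₁ ε E₂, u ↦ u ∘ f^t, is linear and continuous. If moreover f is injective, then f ε Id is injective. -/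
open Filter Topology Set Bornology Pointwise

variable (E : Type*) [AddCommGroup E] [Module ℝ E] [TopologicalSpace E]

/-
The transpose `fᵗ` and `f ε Id` are precompositions, continuous because `f` maps absolutely
convex compact sets to absolutely convex compact sets and `fᵗ` maps equicontinuous sets of
functionals to equicontinuous sets. Injectivity rests on the easy half of the Mackey–Arens
theorem: by the bipolar theorem, every continuous linear functional on `E'_c` is evaluation at a
point of `E`. If `u ∘ fᵗ = 0`, then for each `z' ∈ E₂'` the functional `z' ∘ u` is evaluation at
some `y` with `x' (f y) = 0` for all `x' ∈ E₁'`; hence `f y = 0`, so `y = 0`, and `u = 0` because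
`E₂'` separates points.
-/

theorem Balanced.linearMap_image {E F : Type*} [AddCommGroup E] [Module ℝ E] [AddCommGroup F]
    [Module ℝ F] {s : Set E} (hs : Balanced ℝ s) (f : E →ₗ[ℝ] F) : Balanced ℝ (f '' s) :=
  fun a ha => by
    rw [← image_smul_set]
    exact image_mono (hs a ha)

section AbsConvexCompact

variable {E : Type*} [AddCommGroup E] [Module ℝ E] [TopologicalSpace E]

theorem directedOn_absConvex_isCompact [ContinuousAdd E] :
    DirectedOn (· ⊆ ·) {K : Set E | Convex ℝ K ∧ Balanced ℝ K ∧ IsCompact K} := by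
  rintro K₁ hK₁ K₂ hK₂
  rcases K₁.eq_empty_or_nonempty with rfl | hne₁
  · exact ⟨K₂, hK₂, empty_subset _, subset_rfl⟩
  rcases K₂.eq_empty_or_nonempty with rfl | hne₂
  · exact ⟨K₁, hK₁, subset_rfl, empty_subset _⟩
  exact ⟨K₁ + K₂, ⟨hK₁.1.add hK₂.1, hK₁.2.1.add hK₂.2.1, hK₁.2.2.add hK₂.2.2⟩,
    subset_add_left _ (hK₂.2.1.zero_mem hne₂), subset_add_right _ (hK₁.2.1.zero_mem hne₁)⟩

theorem mapsTo_image_absConvex_isCompact {F : Type*} [AddCommGroup F] [Module ℝ F]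
    [TopologicalSpace F] (f : E →L[ℝ] F) :
    MapsTo (f '' ·) {K : Set E | Convex ℝ K ∧ Balanced ℝ K ∧ IsCompact K}
      {K : Set F | Convex ℝ K ∧ Balanced ℝ K ∧ IsCompact K} := fun _ ⟨hc, hb, hk⟩ =>
  ⟨hc.linear_image f.toLinearMap, hb.linearMap_image f.toLinearMap, hk.image f.continuous⟩

end AbsConvexCompact

namespace ArensDual

variable {E : Type*} [AddCommGroup E] [Module ℝ E] [TopologicalSpace E]

theorem exists_absConvex_isCompact_bound [ContinuousAdd E] [ContinuousConstSMul ℝ E]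
    (φ : ArensDual E →L[ℝ] ℝ) :
    ∃ K : Set E, Convex ℝ K ∧ Balanced ℝ K ∧ IsCompact K ∧ K.Nonempty ∧
      ∀ w : ArensDual E, (∀ x ∈ K, |w x| ≤ 1) → |φ w| ≤ 1 := by
  have hbasis := UniformConvergenceCLM.hasBasis_nhds_zero_of_basis (RingHom.id ℝ) ℝ
    {K : Set E | Convex ℝ K ∧ Balanced ℝ K ∧ IsCompact K}
    ⟨∅, convex_empty, balanced_empty, isCompact_empty⟩ directedOn_absConvex_isCompact
    (Metric.nhds_basis_closedBall (x := (0 : ℝ)))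
  have hφ : φ ⁻¹' Metric.closedBall 0 1 ∈ 𝓝 (0 : ArensDual E) :=
    φ.continuous.tendsto' 0 0 (map_zero φ) (Metric.closedBall_mem_nhds 0 one_pos)
  obtain ⟨⟨K₀, δ⟩, ⟨hK₀, hδ⟩, hsub⟩ := hbasis.mem_iff.1 hφ
  obtain ⟨K₁, ⟨hc, hb, hk⟩, hK₀₁, h0⟩ := directedOn_absConvex_isCompact K₀ hK₀ {0}
    ⟨convex_singleton 0, balanced_zero, isCompact_singleton⟩
  refine ⟨δ⁻¹ • K₁, hc.smul _, hb.smul _, hk.smul _, (singleton_nonempty 0).mono h0 |>.smul_set,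
    fun w hw => ?_⟩
  have hwK₀ : ∀ x ∈ K₀, w x ∈ Metric.closedBall (0 : ℝ) δ := fun x hx => by
    have := hw _ (smul_mem_smul_set (hK₀₁ hx))
    rw [map_smul, smul_eq_mul, abs_mul, abs_inv, abs_of_pos hδ, inv_mul_le_iff₀ hδ,
      mul_one] at this
    simpa using this
  simpa using hsub hwK₀

/-- The bipolar theorem for the dual pair `(E, E')`, carried out in the algebraic dual of `E'`
with its weak-* topology, where the image of `K` is compact and convex. -/
theorem exists_mem_eq_apply_of_bound
    {K : Set E} (hc : Convex ℝ K) (hb : Balanced ℝ K) (hk : IsCompact K) (hne : K.Nonempty)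
    (φ : ArensDual E →ₗ[ℝ] ℝ) (hφ : ∀ w : ArensDual E, (∀ x ∈ K, |w x| ≤ 1) → |φ w| ≤ 1) :
    ∃ y ∈ K, ∀ w : ArensDual E, φ w = w y := by
  let B : Module.Dual ℝ (ArensDual E) →ₗ[ℝ] Module.Dual ℝ (ArensDual E) := LinearMap.id
  let j : E →ₗ[ℝ] WeakBilin B := (topDualPairing ℝ E).flip
  suffices (φ : WeakBilin B) ∈ j '' K by
    obtain ⟨y, hy, hjy⟩ := this
    exact ⟨y, hy, fun w => (LinearMap.congr_fun hjy w).symm⟩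
  by_contra hφK
  have : T2Space (WeakBilin B) := (WeakBilin.isEmbedding (B := B) Function.injective_id).t2Space
  have hj : Continuous j := WeakBilin.continuous_of_continuous_eval _ fun w => w.continuous
  obtain ⟨ψ, u, hψ, hu⟩ :=
    geometric_hahn_banach_closed_point (hc.linear_image j) (hk.image hj).isClosed hφK
  obtain ⟨w₀, rfl⟩ := LinearMap.dualEmbedding_surjective B ψ
  have hlt : ∀ x ∈ K, w₀ x < u := fun x hx => hψ _ ⟨x, hx, rfl⟩
  have hu₀ : 0 < u := by simpa using hlt 0 (hb.zero_mem hne)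
  have hle : ∀ x ∈ K, |(u⁻¹ • w₀) x| ≤ 1 := fun x hx => by
    have hneg := hlt (-x) (hb.neg_mem_iff.2 hx)
    rw [map_neg] at hneg
    rw [smul_apply, smul_eq_mul, abs_mul, abs_inv, abs_of_pos hu₀, inv_mul_le_iff₀ hu₀,
      mul_one, abs_le]
    exact ⟨by linarith, (hlt x hx).le⟩
  have hφu := hφ _ hle
  rw [map_smul, smul_eq_mul, abs_mul, abs_inv, abs_of_pos hu₀, inv_mul_le_iff₀ hu₀,
    mul_one] at hφu
  exact hu.not_ge ((le_abs_self _).trans hφu)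

theorem exists_eq_apply [ContinuousAdd E] [ContinuousConstSMul ℝ E]
    (φ : ArensDual E →L[ℝ] ℝ) : ∃ y : E, ∀ w : ArensDual E, φ w = w y := by
  obtain ⟨K, hc, hb, hk, hne, hφ⟩ := exists_absConvex_isCompact_bound φ
  obtain ⟨y, -, hy⟩ := exists_mem_eq_apply_of_bound hc hb hk hne φ.toLinearMap hφ
  exact ⟨y, hy⟩

variable {F : Type*} [AddCommGroup F] [Module ℝ F] [TopologicalSpace F]

noncomputable def transpose (f : F →L[ℝ] E) : ArensDual E →L[ℝ] ArensDual F :=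
  ContinuousLinearMap.precompUniformConvergenceCLM ℝ _ _ f (mapsTo_image_absConvex_isCompact f)

theorem mapsTo_image_transpose_equicontinuous (f : F →L[ℝ] E) :
    MapsTo (transpose f '' ·) {H : Set (ArensDual E) | Equicontinuous fun w : H => (w.1 : E → ℝ)}
      {H : Set (ArensDual F) | Equicontinuous fun w : H => (w.1 : F → ℝ)} :=
  fun _ hH y₀ U hU => ((f.continuous.tendsto y₀).eventually (hH (f y₀) U hU)).mono
    fun _ hy ⟨_, x', hx', hw⟩ => hw ▸ hy ⟨x', hx'⟩

theorem eq_zero_of_apply_transpose_eq_zero {G : Type*} [AddCommGroup G] [Module ℝ G]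
    [TopologicalSpace G] [SeparatingDual ℝ G] [ContinuousAdd F] [ContinuousConstSMul ℝ F]
    [SeparatingDual ℝ E] {f : F →L[ℝ] E} (hf : Function.Injective f)
    (u : ArensDual F →L[ℝ] G) (hu : ∀ x' : ArensDual E, u (transpose f x') = 0) : u = 0 := by
  ext w
  refine SeparatingDual.eq_zero_of_forall_dual_eq_zero (R := ℝ) fun z' => ?_
  obtain ⟨y, hy⟩ := exists_eq_apply (z'.comp u)
  have hfy : f y = 0 := SeparatingDual.eq_zero_of_forall_dual_eq_zero (R := ℝ) fun x' =>
    (hy (transpose f x')).symm.trans ((congrArg z' (hu x')).trans (map_zero z'))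
  simpa [hf (hfy.trans (map_zero f).symm)] using hy w

end ArensDual

theorem epsProduct_map_left_general
    (F₁ E₁ E₂ : Type*)
    [AddCommGroup F₁] [Module ℝ F₁] [TopologicalSpace F₁] [IsTopologicalAddGroup F₁]
    [ContinuousSMul ℝ F₁]
    [AddCommGroup E₁] [Module ℝ E₁] [TopologicalSpace E₁] [IsTopologicalAddGroup E₁]
    [ContinuousSMul ℝ E₁] [LocallyConvexSpace ℝ E₁] [T2Space E₁]
    [AddCommGroup E₂] [Module ℝ E₂] [TopologicalSpace E₂] [IsTopologicalAddGroup E₂]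
    [ContinuousSMul ℝ E₂] [LocallyConvexSpace ℝ E₂] [T2Space E₂]
    (f : F₁ →L[ℝ] E₁) :
    ∃ ft : ArensDual E₁ →L[ℝ] ArensDual F₁,
      (∀ (x' : ArensDual E₁) (y : F₁), (ft x') y = x' (f y)) ∧
      ∃ g : EpsProduct F₁ E₂ →L[ℝ] EpsProduct E₁ E₂,
        (∀ (u : EpsProduct F₁ E₂) (x' : ArensDual E₁), (g u) x' = u (ft x')) ∧
        (Function.Injective f → Function.Injective g) := by
  let g : EpsProduct F₁ E₂ →L[ℝ] EpsProduct E₁ E₂ :=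
    ContinuousLinearMap.precompUniformConvergenceCLM E₂ _ _ (ArensDual.transpose f)
      (ArensDual.mapsTo_image_transpose_equicontinuous f)
  refine ⟨ArensDual.transpose f, fun _ _ => rfl, g, fun _ _ => rfl, fun hf => ?_⟩
  refine (injective_iff_map_eq_zero g).2 fun u hu => ?_
  exact ArensDual.eq_zero_of_apply_transpose_eq_zero hf u fun x' => congrArg (· x') hu

/-- For a continuous linear map `f : F₁ → E₁` between Hausdorff locally
convex spaces over `ℝ`, the transpose `fᵗ : (E₁)'_c → (F₁)'_c` is continuous, the induced map
`f ε Id : F₁ ε E₂ → E₁ ε E₂`, `u ↦ u ∘ fᵗ`, is linear and continuous, and it is injective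
whenever `f` is injective. -/
theorem epsProduct_map_left
    (F₁ E₁ E₂ : Type*)
    [AddCommGroup F₁] [Module ℝ F₁] [TopologicalSpace F₁] [IsTopologicalAddGroup F₁]
    [ContinuousSMul ℝ F₁] [LocallyConvexSpace ℝ F₁] [T2Space F₁]
    [AddCommGroup E₁] [Module ℝ E₁] [TopologicalSpace E₁] [IsTopologicalAddGroup E₁]
    [ContinuousSMul ℝ E₁] [LocallyConvexSpace ℝ E₁] [T2Space E₁]
    [AddCommGroup E₂] [Module ℝ E₂] [TopologicalSpace E₂] [IsTopologicalAddGroup E₂]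
    [ContinuousSMul ℝ E₂] [LocallyConvexSpace ℝ E₂] [T2Space E₂]
    (f : F₁ →L[ℝ] E₁) :
    ∃ ft : ArensDual E₁ →L[ℝ] ArensDual F₁,
      (∀ (x' : ArensDual E₁) (y : F₁), (ft x') y = x' (f y)) ∧
      ∃ g : EpsProduct F₁ E₂ →L[ℝ] EpsProduct E₁ E₂,
        (∀ (u : EpsProduct F₁ E₂) (x' : ArensDual E₁), (g u) x' = u (ft x')) ∧
        (Function.Injective f → Function.Injective g) :=
  epsProduct_map_left_general F₁ E₁ E₂ f
end
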